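/- arXiv:1909.09122 — 5 statements merged into one kernel-verified Lean document; each statement's English description precedes it below -/
import Mathlib

section
/- Let k be a field of characteristic p > 0 and u, v ≥ p. With Sym^n U identified with polynomials of degree ≤ n in k[x], the p-fold composition ι^p_{u,v}: Sym^{u-p}U ⊗ Sym^{v-p}U → Sym^u U ⊗ Sym^v U satisfies ι^p_{u,v}(f ⊗ g) = f ⊗ x^p g − x^p f ⊗ g. In particular, the image of ι^2_{u,v} contains nonzero tensors of rank two. -/
open Polynomial
open scoped TensorProduct

/-- The map `ι : f ⊗ g ↦ f ⊗ xg - xf ⊗ g` on `k[x] ⊗ k[x]` (the maps `ι_{u,v}` of the paper,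
in the polynomial model `Sym^n U` = polynomials of degree `≤ n`). -/
noncomputable def iotaMap (k : Type) [Field k] :
    Module.End k (Polynomial k ⊗[k] Polynomial k) :=
  LinearMap.lTensor (Polynomial k) (LinearMap.mulLeft k (X : k[X])) -
    LinearMap.rTensor (Polynomial k) (LinearMap.mulLeft k (X : k[X]))

/-- `Sym^a U ⊗ Sym^b U` inside `k[x] ⊗ k[x]`: the image of
`degreeLE k a ⊗ degreeLE k b`. -/
noncomputable def symTensor (k : Type) [Field k] (a b : WithBot ℕ) :
    Submodule k (Polynomial k ⊗[k] Polynomial k) :=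
  LinearMap.range (TensorProduct.map (degreeLE k a).subtype (degreeLE k b).subtype)

/-!
In the algebra `k[x] ⊗ k[x]`, `ι` is multiplication by `w = 1 ⊗ x - x ⊗ 1`, so `ι^n` is
multiplication by `w^n`. In characteristic `p` the Frobenius is additive, so
`w^p = 1 ⊗ x^p - x^p ⊗ 1`, which gives the formula for `ι^p`. Since `ι` raises both degrees
by one, `ι^(p-2)(1 ⊗ 1)` lies in `Sym^{u-2} ⊗ Sym^{v-2}` and its image under `ι²` is the
rank-two tensor `ι^p(1 ⊗ 1) = 1 ⊗ x^p - x^p ⊗ 1`, which is nonzero.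
-/

theorem one_tmul_sub_tmul_one_pow_char {k A : Type*} [Field k] [CommRing A] [Nontrivial A]
    [Algebra k A] (p : ℕ) [Fact p.Prime] [CharP k p] (a : A) :
    ((1 : A) ⊗ₜ[k] a - a ⊗ₜ[k] 1) ^ p = (1 : A) ⊗ₜ[k] (a ^ p) - (a ^ p) ⊗ₜ[k] (1 : A) := by
  have : CharP (A ⊗[k] A) p := charP_of_injective_algebraMap (algebraMap k _).injective p
  rw [sub_pow_char, Algebra.TensorProduct.tmul_pow, Algebra.TensorProduct.tmul_pow, one_pow]

namespace iotaMap

variable {k : Type} [Field k]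

theorem eq_mulLeft :
    iotaMap k = LinearMap.mulLeft k ((1 : k[X]) ⊗ₜ[k] X - X ⊗ₜ[k] 1) := by
  refine TensorProduct.ext' fun f g => ?_
  simp [iotaMap, sub_mul, Algebra.TensorProduct.tmul_mul_tmul]

theorem pow_char_tmul (p : ℕ) [Fact p.Prime] [CharP k p] (f g : k[X]) :
    (iotaMap k ^ p) (f ⊗ₜ[k] g) = f ⊗ₜ[k] (X ^ p * g) - (X ^ p * f) ⊗ₜ[k] g := by
  rw [eq_mulLeft, LinearMap.pow_mulLeft, LinearMap.mulLeft_apply,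
    one_tmul_sub_tmul_one_pow_char, sub_mul]
  simp [Algebra.TensorProduct.tmul_mul_tmul]

end iotaMap

theorem X_mul_mem_degreeLE {k : Type*} [Semiring k] {c : WithBot ℕ} {f : k[X]}
    (hf : f ∈ degreeLE k c) : X * f ∈ degreeLE k (c + 1) := by
  rw [mem_degreeLE] at hf ⊢
  calc (X * f).degree ≤ X.degree + f.degree := degree_mul_le _ _
    _ ≤ 1 + c := add_le_add degree_X_le hf
    _ = c + 1 := add_comm _ _

namespace symTensor

variable {k : Type} [Field k]

theorem tmul_mem {a b : WithBot ℕ} {f g : k[X]} (hf : f ∈ degreeLE k a)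
    (hg : g ∈ degreeLE k b) : f ⊗ₜ[k] g ∈ symTensor k a b :=
  ⟨(⟨f, hf⟩ : degreeLE k a) ⊗ₜ[k] (⟨g, hg⟩ : degreeLE k b), rfl⟩

theorem eq_span (a b : WithBot ℕ) :
    symTensor k a b =
      Submodule.span k {t | ∃ f ∈ degreeLE k a, ∃ g ∈ degreeLE k b, f ⊗ₜ[k] g = t} := by
  simp [symTensor, TensorProduct.range_map_eq_span_tmul]

theorem mono {a a' b b' : WithBot ℕ} (ha : a ≤ a') (hb : b ≤ b') :
    symTensor k a b ≤ symTensor k a' b' := by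
  rw [eq_span, Submodule.span_le]
  rintro _ ⟨f, hf, g, hg, rfl⟩
  exact tmul_mem (degreeLE_mono ha hf) (degreeLE_mono hb hg)

theorem map_iotaMap_le (a b : WithBot ℕ) :
    (symTensor k a b).map (iotaMap k) ≤ symTensor k (a + 1) (b + 1) := by
  rw [eq_span, Submodule.map_span_le]
  rintro _ ⟨f, hf, g, hg, rfl⟩
  refine sub_mem (tmul_mem (degreeLE_mono ?_ hf) (X_mul_mem_degreeLE hg))
    (tmul_mem (X_mul_mem_degreeLE hf) (degreeLE_mono ?_ hg))
  all_goals exact le_add_of_nonneg_right zero_le_one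

theorem map_iotaMap_pow_le (a b : WithBot ℕ) (n : ℕ) :
    (symTensor k a b).map (iotaMap k ^ n) ≤ symTensor k (a + n) (b + n) := by
  induction n with
  | zero =>
    rw [pow_zero, Module.End.one_eq_id, Submodule.map_id, Nat.cast_zero, add_zero, add_zero]
  | succ n ih =>
    rw [pow_succ', Module.End.mul_eq_comp, Submodule.map_comp, Nat.cast_succ, ← add_assoc,
      ← add_assoc]
    exact (Submodule.map_mono ih).trans (map_iotaMap_le _ _)

end symTensor

theorem one_tmul_sub_tmul_one_ne_zero {k : Type} [Field k] {f : k[X]} (hf : f ≠ 0)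
    (hf0 : f.coeff 0 = 0) : (1 : k[X]) ⊗ₜ[k] f - f ⊗ₜ[k] (1 : k[X]) ≠ 0 := by
  intro h
  have := congrArg
    ((TensorProduct.lid k k[X]).toLinearMap ∘ₗ LinearMap.rTensor k[X] (lcoeff k 0)) h
  exact hf (by simpa [hf0] using this)

theorem stmt3 (k : Type) [Field k] (p : ℕ) [Fact p.Prime] [CharP k p]
    (u v : ℕ) (hu : p ≤ u) (hv : p ≤ v) :
    (∀ f g : k[X], f ∈ degreeLE k ((u - p : ℕ) : WithBot ℕ) →
      g ∈ degreeLE k ((v - p : ℕ) : WithBot ℕ) →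
      (iotaMap k ^ p) (f ⊗ₜ[k] g) = f ⊗ₜ[k] (X ^ p * g) - (X ^ p * f) ⊗ₜ[k] g) ∧
    ∃ T ∈ Submodule.map (iotaMap k ^ 2 : Module.End k (Polynomial k ⊗[k] Polynomial k))
        (symTensor k ((u - 2 : ℕ) : WithBot ℕ) ((v - 2 : ℕ) : WithBot ℕ)),
      T ≠ 0 ∧ ∃ a₁ b₁ a₂ b₂ : k[X], T = a₁ ⊗ₜ[k] b₁ + a₂ ⊗ₜ[k] b₂ := by
  have hp : 2 ≤ p := (Fact.out : p.Prime).two_le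
  set e : k[X] ⊗[k] k[X] := (1 : k[X]) ⊗ₜ[k] (1 : k[X])
  have hT : (iotaMap k ^ p) e = (1 : k[X]) ⊗ₜ[k] (X ^ p) - (X ^ p) ⊗ₜ[k] (1 : k[X]) := by
    rw [iotaMap.pow_char_tmul, mul_one]
  have hsym : (iotaMap k ^ (p - 2)) e ∈
      symTensor k ((u - 2 : ℕ) : WithBot ℕ) ((v - 2 : ℕ) : WithBot ℕ) := by
    have h1 : (1 : k[X]) ∈ degreeLE k 0 := mem_degreeLE.2 degree_one_le
    refine symTensor.mono ?_ ?_
      (symTensor.map_iotaMap_pow_le 0 0 (p - 2) ⟨e, symTensor.tmul_mem h1 h1, rfl⟩)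
    all_goals rw [zero_add]; exact Nat.cast_le.mpr (by omega)
  refine ⟨fun f g _ _ => iotaMap.pow_char_tmul p f g, (iotaMap k ^ p) e, ⟨_, hsym, ?_⟩, ?_,
    ⟨1, X ^ p, -X ^ p, 1, by rw [hT, sub_eq_add_neg, TensorProduct.neg_tmul]⟩⟩
  · rw [← Module.End.mul_apply, ← pow_add, Nat.add_sub_cancel' hp]
  · rw [hT]
    exact one_tmul_sub_tmul_one_ne_zero (pow_ne_zero p X_ne_zero)
      (by rw [coeff_X_pow, if_neg (by omega)])
end

section
/- Let k be a field with char(k) = 0 or char(k) > min(u,v), where u, v are positive integers. Then the image of ι^2_{u,v}: Sym^{u-2}U ⊗ Sym^{v-2}U → Sym^u U ⊗ Sym^v U (where ι_{u,v}(f⊗g) = f⊗xg − xf⊗g) contains no nonzero tensor of rank at most two. -/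
open Polynomial
open scoped TensorProduct

/-! Write `μ` for the multiplication `k[x] ⊗ k[x] → k[x]`. The image of `ι²` is killed by `μ`,
`μ ∘ (1 ⊗ d/dx)` and `μ ∘ (d/dx ⊗ 1)`. For a nonzero `T = a₁ ⊗ b₁ + a₂ ⊗ b₂` in this image, the
first forces both pairs `(a₁, a₂)` and `(b₁, b₂)` to be linearly independent (a pure tensor
`x ⊗ y` with `x y = 0` vanishes), and then the other two force both Wronskians to vanish. But two
polynomials of degree below the characteristic with vanishing Wronskian are proportional, and
`T ∈ Sym^u U ⊗ Sym^v U` bounds the degrees of the `aᵢ` by `u` and of the `bᵢ` by `v`. -/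

section TensorRankTwo

variable {k V W : Type*} [Field k] [AddCommGroup V] [Module k V] [AddCommGroup W] [Module k W]

lemma exists_tmul_eq_of_not_linearIndependent_left {a₁ a₂ : V} (b₁ b₂ : W)
    (ha : ¬LinearIndependent k ![a₁, a₂]) : ∃ x y, a₁ ⊗ₜ[k] b₁ + a₂ ⊗ₜ[k] b₂ = x ⊗ₜ y := by
  by_cases ha₁ : a₁ = 0
  · exact ⟨a₂, b₂, by simp [ha₁]⟩
  rw [LinearIndependent.pair_iff' ha₁] at ha
  push Not at ha
  obtain ⟨c, rfl⟩ := ha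
  exact ⟨a₁, b₁ + c • b₂, by rw [TensorProduct.smul_tmul, TensorProduct.tmul_add]⟩

lemma exists_tmul_eq_of_not_linearIndependent_right (a₁ a₂ : V) {b₁ b₂ : W}
    (hb : ¬LinearIndependent k ![b₁, b₂]) : ∃ x y, a₁ ⊗ₜ[k] b₁ + a₂ ⊗ₜ[k] b₂ = x ⊗ₜ y := by
  obtain ⟨y, x, h⟩ := exists_tmul_eq_of_not_linearIndependent_left a₁ a₂ hb
  exact ⟨x, y, by simpa using congrArg (TensorProduct.comm k W V) h⟩

lemma map_mem_range_map_subtype {V' W' : Type*} [AddCommGroup V'] [Module k V'] [AddCommGroup W']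
    [Module k W'] {M : Submodule k V} {N : Submodule k W} {M' : Submodule k V'}
    {N' : Submodule k W'} {f : V →ₗ[k] V'} {g : W →ₗ[k] W'} (hf : ∀ x ∈ M, f x ∈ M')
    (hg : ∀ y ∈ N, g y ∈ N') {T : V ⊗[k] W}
    (hT : T ∈ LinearMap.range (TensorProduct.map M.subtype N.subtype)) :
    TensorProduct.map f g T ∈ LinearMap.range (TensorProduct.map M'.subtype N'.subtype) := by
  obtain ⟨z, rfl⟩ := hT
  refine ⟨TensorProduct.map (f.restrict hf) (g.restrict hg) z, ?_⟩
  simp only [← LinearMap.comp_apply, ← TensorProduct.map_comp, LinearMap.subtype_comp_restrict]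
  rfl

lemma mem_right_of_tmul_add_tmul_mem_range_map_subtype {M : Submodule k V} {N : Submodule k W}
    {a₁ a₂ : V} {b₁ b₂ : W} (ha : LinearIndependent k ![a₁, a₂])
    (hT : a₁ ⊗ₜ[k] b₁ + a₂ ⊗ₜ[k] b₂ ∈ LinearMap.range (TensorProduct.map M.subtype N.subtype)) :
    b₁ ∈ N := by
  have ha₁ : a₁ ∉ Submodule.span k {a₂} := by
    rw [Submodule.mem_span_singleton]
    exact fun ⟨c, hc⟩ => (LinearIndependent.pair_iff' (by simpa using ha.ne_zero 1)).mp
      (LinearIndependent.pair_symm_iff.mp ha) c hc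
  obtain ⟨φ, hφa₁, hφa₂⟩ := Submodule.exists_le_ker_of_notMem ha₁
  have hφa₂ : φ a₂ = 0 := hφa₂ (Submodule.mem_span_singleton_self a₂)
  have hmem (z : M ⊗[k] N) :
      TensorProduct.lid k W (φ.rTensor W (TensorProduct.map M.subtype N.subtype z)) ∈ N := by
    induction z using TensorProduct.induction_on with
    | zero => simp
    | tmul x y => simpa using N.smul_mem _ y.2
    | add z₁ z₂ h₁ h₂ => simpa only [map_add] using add_mem h₁ h₂
  obtain ⟨z, hz⟩ := hT
  simpa [hz, hφa₂, Submodule.smul_mem_iff _ hφa₁] using hmem z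

lemma mem_left_of_tmul_add_tmul_mem_range_map_subtype {M : Submodule k V} {N : Submodule k W}
    {a₁ a₂ : V} {b₁ b₂ : W} (hb : LinearIndependent k ![b₁, b₂])
    (hT : a₁ ⊗ₜ[k] b₁ + a₂ ⊗ₜ[k] b₂ ∈ LinearMap.range (TensorProduct.map M.subtype N.subtype)) :
    a₁ ∈ M := by
  refine mem_right_of_tmul_add_tmul_mem_range_map_subtype (M := N) (a₂ := b₂) (b₂ := a₂) hb ?_
  obtain ⟨z, hz⟩ := hT
  refine ⟨TensorProduct.comm k M N z, ?_⟩
  rw [TensorProduct.map_comm]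
  simp [hz]

end TensorRankTwo

section Wronskian

lemma natDegree_eq_zero_of_derivative_eq_zero_of_natDegree_lt {R : Type*} [CommRing R]
    [NoZeroDivisors R] (p : ℕ) [CharP R p] {f : R[X]} (hf : derivative f = 0)
    (hp : p = 0 ∨ f.natDegree < p) : f.natDegree = 0 := by
  by_contra hn
  have hf₀ : f ≠ 0 := by rintro rfl; simp at hn
  obtain ⟨m, hm⟩ := Nat.exists_eq_add_one_of_ne_zero hn
  have hcoeff := coeff_derivative f m
  rw [hf, coeff_zero, ← Nat.cast_add_one, ← hm, eq_comm, mul_eq_zero,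
    CharP.cast_eq_zero_iff R p] at hcoeff
  rcases hcoeff with hlc | hdvd
  · exact hf₀ (leadingCoeff_eq_zero.mp hlc)
  rcases hp with rfl | hlt
  · exact hn (zero_dvd_iff.mp hdvd)
  · exact (Nat.le_of_dvd (Nat.pos_of_ne_zero hn) hdvd).not_gt hlt

/-- Dividing out `gcd f g` reduces to the coprime case, where a vanishing Wronskian forces both
derivatives to vanish (`IsCoprime.wronskian_eq_zero_iff`); below the characteristic this makes
both quotients constant. -/
theorem not_linearIndependent_of_wronskian_eq_zero {k : Type*} [Field k] (p : ℕ) [CharP k p]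
    {f g : k[X]} (hW : wronskian f g = 0) (hp : p = 0 ∨ f.natDegree < p ∧ g.natDegree < p) :
    ¬LinearIndependent k ![f, g] := by
  classical
  intro hfg
  have hf : f ≠ 0 := by simpa using hfg.ne_zero 0
  have hg : g ≠ 0 := by simpa using hfg.ne_zero 1
  obtain ⟨c₁, c₂, hfd, hgd, hunit⟩ := extract_gcd f g
  have hcop : IsCoprime c₁ c₂ := (gcd_isUnit_iff c₁ c₂).mp hunit
  generalize gcd f g = d at hfd hgd
  subst hfd hgd
  have hd : d ≠ 0 := left_ne_zero_of_mul hf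
  have hW' : d ^ 2 * wronskian c₁ c₂ = 0 := by
    rw [← hW]
    simp only [wronskian, derivative_mul]
    ring
  obtain ⟨hc₁', hc₂'⟩ := hcop.wronskian_eq_zero_iff.mp
    ((mul_eq_zero.mp hW').resolve_left (pow_ne_zero 2 hd))
  have hc₁ := eq_C_of_natDegree_eq_zero <|
    natDegree_eq_zero_of_derivative_eq_zero_of_natDegree_lt p hc₁' <| hp.imp_right fun h =>
      (natDegree_le_of_dvd (dvd_mul_left c₁ d) hf).trans_lt h.1
  have hc₂ := eq_C_of_natDegree_eq_zero <|
    natDegree_eq_zero_of_derivative_eq_zero_of_natDegree_lt p hc₂' <| hp.imp_right fun h =>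
      (natDegree_le_of_dvd (dvd_mul_left c₂ d) hg).trans_lt h.2
  have hdep : c₂.coeff 0 • (d * c₁) + (-c₁.coeff 0) • (d * c₂) = 0 := by
    rw [hc₁, hc₂, smul_eq_C_mul, smul_eq_C_mul]
    simp only [coeff_C_zero, map_neg]
    ring
  have hc₁0 : c₁.coeff 0 = 0 := neg_eq_zero.mp (LinearIndependent.pair_iff.mp hfg _ _ hdep).2
  exact hf (by rw [hc₁, hc₁0, map_zero, mul_zero])

lemma wronskian_eq_zero_of_mul_add_mul_eq_zero {R : Type*} [CommRing R] [NoZeroDivisors R]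
    {a₁ a₂ b₁ b₂ : R[X]} (ha₁ : a₁ ≠ 0) (h₀ : a₁ * b₁ + a₂ * b₂ = 0)
    (h₁ : a₁ * derivative b₁ + a₂ * derivative b₂ = 0) : wronskian b₁ b₂ = 0 := by
  have h : a₁ * wronskian b₁ b₂ = 0 := by
    rw [wronskian]
    linear_combination derivative b₂ * h₀ - b₂ * h₁
  exact (mul_eq_zero.mp h).resolve_left ha₁

end Wronskian

section IotaMap

variable {k : Type} [Field k]

lemma iotaMap_tmul (f g : k[X]) :
    iotaMap k (f ⊗ₜ[k] g) = f ⊗ₜ[k] (X * g) - (X * f) ⊗ₜ[k] g := by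
  simp [iotaMap]

lemma mul'_comp_iotaMap_sq : LinearMap.mul' k k[X] ∘ₗ iotaMap k ^ 2 = 0 := by
  refine TensorProduct.ext' fun f g => ?_
  simp only [LinearMap.comp_apply, pow_two, Module.End.mul_apply, iotaMap_tmul, map_sub,
    LinearMap.mul'_apply, LinearMap.zero_apply]
  ring

lemma mul'_comp_lTensor_derivative_comp_iotaMap_sq :
    LinearMap.mul' k k[X] ∘ₗ LinearMap.lTensor k[X] (derivative : k[X] →ₗ[k] k[X]) ∘ₗ
      iotaMap k ^ 2 = 0 := by
  refine TensorProduct.ext' fun f g => ?_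
  simp only [LinearMap.comp_apply, pow_two, Module.End.mul_apply, iotaMap_tmul, map_sub,
    LinearMap.lTensor_tmul, derivative_mul, derivative_X, LinearMap.mul'_apply,
    LinearMap.zero_apply]
  ring

lemma mul'_comp_rTensor_derivative_comp_iotaMap_sq :
    LinearMap.mul' k k[X] ∘ₗ LinearMap.rTensor k[X] (derivative : k[X] →ₗ[k] k[X]) ∘ₗ
      iotaMap k ^ 2 = 0 := by
  refine TensorProduct.ext' fun f g => ?_
  simp only [LinearMap.comp_apply, pow_two, Module.End.mul_apply, iotaMap_tmul, map_sub,
    LinearMap.rTensor_tmul, derivative_mul, derivative_X, LinearMap.mul'_apply,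
    LinearMap.zero_apply]
  ring

lemma symTensor_mono {a a' b b' : WithBot ℕ} (ha : a ≤ a') (hb : b ≤ b') :
    symTensor k a b ≤ symTensor k a' b' := fun _ hT => by
  simpa only [symTensor, TensorProduct.map_id, LinearMap.id_apply] using
    map_mem_range_map_subtype (f := LinearMap.id) (g := LinearMap.id)
      (fun _ hx => degreeLE_mono ha hx) (fun _ hy => degreeLE_mono hb hy) hT

lemma iotaMap_mem_symTensor {a b : WithBot ℕ} {S : k[X] ⊗[k] k[X]} (hS : S ∈ symTensor k a b) :
    iotaMap k S ∈ symTensor k (a + 1) (b + 1) := by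
  have hle {n : WithBot ℕ} (f : k[X]) (hf : f ∈ degreeLE k n) : f ∈ degreeLE k (n + 1) :=
    degreeLE_mono (le_add_of_nonneg_right zero_le_one) hf
  have hX {n : WithBot ℕ} (f : k[X]) (hf : f ∈ degreeLE k n) : X * f ∈ degreeLE k (n + 1) := by
    rw [mem_degreeLE, mul_comm, degree_mul_X]
    exact add_le_add_left (mem_degreeLE.mp hf) 1
  exact sub_mem (map_mem_range_map_subtype hle hX hS) (map_mem_range_map_subtype hX hle hS)

lemma iotaMap_sq_mem_symTensor {a b : WithBot ℕ} {S : k[X] ⊗[k] k[X]}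
    (hS : S ∈ symTensor k a b) : (iotaMap k ^ 2) S ∈ symTensor k (a + 1 + 1) (b + 1 + 1) :=
  iotaMap_mem_symTensor (iotaMap_mem_symTensor hS)

end IotaMap

lemma linearIndependent_pairs_of_tmul_add_tmul_ne_zero {k A : Type*} [Field k] [CommRing A]
    [IsDomain A] [Algebra k A] {a₁ a₂ b₁ b₂ : A} (h₀ : a₁ * b₁ + a₂ * b₂ = 0)
    (hT : a₁ ⊗ₜ[k] b₁ + a₂ ⊗ₜ[k] b₂ ≠ 0) :
    LinearIndependent k ![a₁, a₂] ∧ LinearIndependent k ![b₁, b₂] := by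
  have hpure : ¬∃ x y : A, a₁ ⊗ₜ[k] b₁ + a₂ ⊗ₜ[k] b₂ = x ⊗ₜ y := by
    rintro ⟨x, y, hxy⟩
    have hxy₀ : x * y = 0 := by simpa [h₀] using congrArg (LinearMap.mul' k A) hxy.symm
    rcases mul_eq_zero.mp hxy₀ with rfl | rfl <;> simp [hxy] at hT
  exact ⟨not_not.mp (hpure ∘ exists_tmul_eq_of_not_linearIndependent_left b₁ b₂),
    not_not.mp (hpure ∘ exists_tmul_eq_of_not_linearIndependent_right a₁ a₂)⟩

theorem tmul_add_tmul_eq_zero_of_mem_symTensor {k : Type} [Field k] (p : ℕ) [CharP k p]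
    {u v : ℕ} {a₁ a₂ b₁ b₂ : k[X]} (hT : a₁ ⊗ₜ[k] b₁ + a₂ ⊗ₜ[k] b₂ ∈ symTensor k u v)
    (h₀ : a₁ * b₁ + a₂ * b₂ = 0) (h₁ : a₁ * derivative b₁ + a₂ * derivative b₂ = 0)
    (h₂ : derivative a₁ * b₁ + derivative a₂ * b₂ = 0) (hp : p = 0 ∨ min u v < p) :
    a₁ ⊗ₜ[k] b₁ + a₂ ⊗ₜ[k] b₂ = 0 := by
  by_contra hT₀
  obtain ⟨ha, hb⟩ := linearIndependent_pairs_of_tmul_add_tmul_ne_zero h₀ hT₀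
  have hWa : wronskian a₁ a₂ = 0 := wronskian_eq_zero_of_mul_add_mul_eq_zero (a₂ := b₂)
    (by simpa using hb.ne_zero 0) (by linear_combination h₀) (by linear_combination h₂)
  have hWb : wronskian b₁ b₂ = 0 :=
    wronskian_eq_zero_of_mul_add_mul_eq_zero (by simpa using ha.ne_zero 0) h₀ h₁
  have hT' : a₂ ⊗ₜ[k] b₂ + a₁ ⊗ₜ[k] b₁ ∈ symTensor k u v := add_comm (a₁ ⊗ₜ[k] b₁) _ ▸ hT
  have hdeg {f : k[X]} {n : ℕ} (hf : f ∈ degreeLE k n) (hn : n < p) : f.natDegree < p :=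
    (natDegree_le_iff_degree_le.mpr (mem_degreeLE.mp hf)).trans_lt hn
  rcases hp with hp | hp
  · exact not_linearIndependent_of_wronskian_eq_zero p hWa (.inl hp) ha
  rcases min_lt_iff.mp hp with hu | hv
  · refine not_linearIndependent_of_wronskian_eq_zero p hWa (.inr ⟨?_, ?_⟩) ha
    · exact hdeg (mem_left_of_tmul_add_tmul_mem_range_map_subtype hb hT) hu
    · exact hdeg (mem_left_of_tmul_add_tmul_mem_range_map_subtype
        (LinearIndependent.pair_symm_iff.mp hb) hT') hu
  · refine not_linearIndependent_of_wronskian_eq_zero p hWb (.inr ⟨?_, ?_⟩) hb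
    · exact hdeg (mem_right_of_tmul_add_tmul_mem_range_map_subtype ha hT) hv
    · exact hdeg (mem_right_of_tmul_add_tmul_mem_range_map_subtype
        (LinearIndependent.pair_symm_iff.mp ha) hT') hv

theorem stmt4_general (k : Type) [Field k] (p : ℕ) [CharP k p]
    (u v : ℕ) (hp : p = 0 ∨ min u v < p) :
    ∀ T ∈ Submodule.map (iotaMap k ^ 2 : Module.End k (Polynomial k ⊗[k] Polynomial k))
        (symTensor k (if u < 2 then (⊥ : WithBot ℕ) else ((u - 2 : ℕ) : WithBot ℕ)) (if v < 2 then (⊥ : WithBot ℕ) else ((v - 2 : ℕ) : WithBot ℕ))),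
      (∃ a₁ b₁ a₂ b₂ : k[X], T = a₁ ⊗ₜ[k] b₁ + a₂ ⊗ₜ[k] b₂) → T = 0 := by
  rintro _ ⟨S, hS, rfl⟩ ⟨a₁, b₁, a₂, b₂, hT⟩
  have hdeg (n : ℕ) : (if n < 2 then ⊥ else ((n - 2 : ℕ) : WithBot ℕ)) + 1 + 1 ≤ n := by
    split_ifs with hn
    · simp
    · norm_cast
      omega
  have hmem := symTensor_mono (hdeg u) (hdeg v) (iotaMap_sq_mem_symTensor hS)
  have h₀ := LinearMap.congr_fun mul'_comp_iotaMap_sq S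
  have h₁ := LinearMap.congr_fun mul'_comp_lTensor_derivative_comp_iotaMap_sq S
  have h₂ := LinearMap.congr_fun mul'_comp_rTensor_derivative_comp_iotaMap_sq S
  simp only [LinearMap.comp_apply, LinearMap.zero_apply, hT, map_add, LinearMap.lTensor_tmul,
    LinearMap.rTensor_tmul, LinearMap.mul'_apply] at h₀ h₁ h₂ hmem ⊢
  exact tmul_add_tmul_eq_zero_of_mem_symTensor p hmem h₀ h₁ h₂ hp

theorem stmt4 (k : Type) [Field k] (p : ℕ) [CharP k p]
    (u v : ℕ) (hu : 0 < u) (hv : 0 < v) (hp : p = 0 ∨ min u v < p) :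
    ∀ T ∈ Submodule.map (iotaMap k ^ 2 : Module.End k (Polynomial k ⊗[k] Polynomial k))
        (symTensor k (if u < 2 then (⊥ : WithBot ℕ) else ((u - 2 : ℕ) : WithBot ℕ)) (if v < 2 then (⊥ : WithBot ℕ) else ((v - 2 : ℕ) : WithBot ℕ))),
      (∃ a₁ b₁ a₂ b₂ : k[X], T = a₁ ⊗ₜ[k] b₁ + a₂ ⊗ₜ[k] b₂) → T = 0 :=
  stmt4_general k p u v hp
end

section
/- Suppose a tensor T = Σ_{i=δ}^{ε} x^i ⊗ g_i with g_δ ≠ 0, g_ε ≠ 0, g_i polynomials, satisfies the recursions g_{ε-1} = 2x·g_ε, g_{ε-i} = 2x·g_{ε-i+1} − x²·g_{ε-i+2} for 2 ≤ i ≤ ε−δ, and 2x·g_δ = x²·g_{δ+1} in k[x]. Then ε − δ + 2 = 0 in k; in particular if char(k) = 0 or char(k) > ε − δ + 2, no such tensor exists. -/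
open Polynomial

/-!
Read backwards from `g (ε + 1) = 0`, the recursions are those of the linear recurrence with
characteristic polynomial `(t - x)²`, whose solutions with vanishing initial term are
`i ↦ i xⁱ⁻¹ g ε`. Substituting into the last relation leaves `(ε - δ + 2) x^(ε-δ+1) g ε = 0`,
and `k[x]` is a domain.
-/

section DoubleRootRecurrence

variable {R : Type*} [CommRing R]

/-- `h 0, …, h (n + 1)` satisfy the recurrence with characteristic polynomial `(t - a)²`. -/
def DoubleRootRecurrence (a : R) (h : ℕ → R) (n : ℕ) : Prop :=
  ∀ i, i + 1 ≤ n → h (i + 2) = 2 * a * h (i + 1) - a ^ 2 * h i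

variable {a : R} {h : ℕ → R} {n : ℕ}

namespace DoubleRootRecurrence

theorem apply_succ_eq (hrec : DoubleRootRecurrence a h n) (h0 : h 0 = 0) :
    ∀ i ≤ n, h (i + 1) = (i + 1) * a ^ i * h 1 := by
  intro i
  induction i using Nat.strong_induction_on with
  | _ i ih =>
    intro hi
    match i with
    | 0 => simp
    | 1 => rw [hrec 0 hi, h0]; ring
    | j + 2 =>
      rw [hrec (j + 1) hi, ih (j + 1) (by omega) (by omega), ih j (by omega) (by omega)]
      push_cast
      ring

theorem mul_apply_eq (hrec : DoubleRootRecurrence a h n) (h0 : h 0 = 0) :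
    a * h n = n * a ^ n * h 1 := by
  cases n with
  | zero => simp [h0]
  | succ n =>
    rw [hrec.apply_succ_eq h0 n n.le_succ]
    push_cast
    ring

theorem natCast_mul_pow_mul_eq_zero (hrec : DoubleRootRecurrence a h n) (h0 : h 0 = 0)
    (hlast : 2 * a * h (n + 1) = a ^ 2 * h n) :
    ((n + 2 : ℕ) : R) * a ^ (n + 1) * h 1 = 0 := by
  have hn1 := hrec.apply_succ_eq h0 n le_rfl
  have hn := hrec.mul_apply_eq h0
  push_cast
  linear_combination hlast - (2 * a) * hn1 + a * hn

end DoubleRootRecurrence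

theorem doubleRootRecurrence_rev {g : ℕ → R} {m : ℕ} (hlast : g (m + 1) = 0)
    (h1 : 0 < n → g (m - 1) = 2 * a * g m)
    (h2 : ∀ i, 2 ≤ i → i ≤ n → g (m - i) = 2 * a * g (m - i + 1) - a ^ 2 * g (m - i + 2))
    (hnm : n ≤ m) :
    DoubleRootRecurrence a (fun i ↦ g (m + 1 - i)) n := by
  intro i hi
  beta_reduce
  match i with
  | 0 =>
    rw [show m + 1 - 2 = m - 1 by omega, h1 (by omega), Nat.sub_zero, hlast]
    simp
  | j + 1 =>
    have := h2 (j + 2) (by omega) (by omega)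
    rwa [show m - (j + 2) + 1 = m + 1 - (j + 1 + 1) by omega,
      show m - (j + 2) + 2 = m + 1 - (j + 1) by omega,
      show m - (j + 2) = m + 1 - (j + 1 + 2) by omega] at this

end DoubleRootRecurrence

theorem stmt5_general (k : Type) [Field k] (δ ε : ℕ) (hδε : δ ≤ ε) (g : ℕ → k[X])
    (hout : ∀ i, (i < δ ∨ ε < i) → g i = 0)
    (hε0 : g ε ≠ 0)
    (h1 : δ < ε → g (ε - 1) = 2 * X * g ε)
    (h2 : ∀ i, 2 ≤ i → i ≤ ε - δ → g (ε - i) = 2 * X * g (ε - i + 1) - X ^ 2 * g (ε - i + 2))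
    (h3 : 2 * X * g δ = X ^ 2 * g (δ + 1)) :
    ((ε - δ + 2 : ℕ) : k) = 0 ∧
      ∀ p : ℕ, CharP k p → (p = 0 ∨ ε - δ + 2 < p) → False := by
  obtain ⟨n, rfl⟩ := Nat.exists_eq_add_of_le hδε
  rw [Nat.add_sub_cancel_left] at h2 ⊢
  have hlast : g (δ + n + 1) = 0 := hout _ (Or.inr (by omega))
  have hrec := doubleRootRecurrence_rev hlast (fun hn ↦ h1 (by omega)) h2 (by omega)
  have key := hrec.natCast_mul_pow_mul_eq_zero (by simpa using hlast)
    (by simpa [show δ + n + 1 - n = δ + 1 by omega] using h3)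
  have hchar : ((n + 2 : ℕ) : k) = 0 := by
    rw [← C_eq_zero, map_natCast]
    simpa [hε0] using key
  refine ⟨hchar, fun p hp hp' ↦ ?_⟩
  have hdvd : p ∣ n + 2 := (CharP.cast_eq_zero_iff k p _).mp hchar
  rcases hp' with rfl | hlt
  · simp at hdvd
  · exact absurd (Nat.le_of_dvd (by omega) hdvd) (by omega)

theorem stmt5 (k : Type) [Field k] (δ ε : ℕ) (hδε : δ ≤ ε) (g : ℕ → k[X])
    (hout : ∀ i, (i < δ ∨ ε < i) → g i = 0)
    (hδ0 : g δ ≠ 0) (hε0 : g ε ≠ 0)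
    (h1 : δ < ε → g (ε - 1) = 2 * X * g ε)
    (h2 : ∀ i, 2 ≤ i → i ≤ ε - δ → g (ε - i) = 2 * X * g (ε - i + 1) - X ^ 2 * g (ε - i + 2))
    (h3 : 2 * X * g δ = X ^ 2 * g (δ + 1)) :
    ((ε - δ + 2 : ℕ) : k) = 0 ∧
      ∀ p : ℕ, CharP k p → (p = 0 ∨ ε - δ + 2 < p) → False :=
  stmt5_general k δ ε hδε g hout hε0 h1 h2 h3
end

section
/- Let V = V_1 ⊕ V_2 be k-vector spaces with dim V_i ≥ 2, K ⊆ V_1 ⊗ V_2 ⊆ ⋀²V a subspace, and W(V,K) the middle homology of K ⊗ S → V ⊗ S → S (Koszul differentials, S = Sym V). Then the Koszul sheaf W(V,K) on P(V_1) × P(V_2) vanishes if and only if the orthogonal complement K^⊥ ⊆ V_1^∨ ⊗ V_2^∨ contains no nonzero tensor of rank at most two. -/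
/-!
Fix nonzero `f₁, f₂`. By duality, the fiber complex is exact at `([f₁],[f₂])` iff every
functional `g₁ ⊕ g₂` on `V₁ × V₂` vanishing on the image of `K` is a multiple of `f₁ ⊕ f₂`.
Pulled back along the Koszul map, `g₁ ⊕ g₂` becomes `-(f₁ ⊗ g₂ - g₁ ⊗ f₂)`, and `(g₁, g₂)` is
proportional to `(f₁, f₂)` exactly when `f₁ ⊗ g₂ - g₁ ⊗ f₂ = 0`. So exactness at `([f₁],[f₂])`
says that no nonzero `f₁ ⊗ g₂ - g₁ ⊗ f₂` lies in `K^⊥`; and every nonzero tensor of rank at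
most two can be written in this form with `f₁, f₂ ≠ 0`.
-/

open scoped TensorProduct

variable (k : Type) [Field k]
variable (V₁ V₂ : Type) [AddCommGroup V₁] [Module k V₁] [AddCommGroup V₂] [Module k V₂]

/-- The fiber of the first map of the Koszul sheaf complex at a point `([f₁],[f₂])` of
`ℙ(V₁) × ℙ(V₂)`: the Koszul contraction `V₁ ⊗ V₂ → V₁ × V₂`,
`x ⊗ y ↦ (f₂(y)·x, -f₁(x)·y)`. -/
noncomputable def koszulFiber (f₁ : Module.Dual k V₁) (f₂ : Module.Dual k V₂) :
    V₁ ⊗[k] V₂ →ₗ[k] V₁ × V₂ :=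
  LinearMap.prod
    ((TensorProduct.rid k V₁).toLinearMap.comp (LinearMap.lTensor V₁ f₂))
    (-((TensorProduct.lid k V₂).toLinearMap.comp (LinearMap.rTensor V₂ f₁)))

open TensorProduct LinearMap Module

section VectorSpace

variable {𝕜 E M N : Type*} [Field 𝕜] [AddCommGroup E] [Module 𝕜 E]
  [AddCommGroup M] [Module 𝕜 M] [AddCommGroup N] [Module 𝕜 N]

theorem Module.Dual.exists_eq_smul_of_ker_le {φ ψ : Dual 𝕜 E} (h : ker φ ≤ ker ψ) :
    ∃ c : 𝕜, ψ = c • φ := by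
  have hψ := mem_span_of_iInf_ker_le_ker (L := fun _ : Unit => φ) (by simpa using h)
  rw [Set.range_const, Submodule.mem_span_singleton] at hψ
  obtain ⟨c, hc⟩ := hψ
  exact ⟨c, hc.symm⟩

theorem Subspace.ker_le_iff_forall_mem_dualAnnihilator {φ : Dual 𝕜 E} {W : Subspace 𝕜 E} :
    ker φ ≤ W ↔ ∀ ψ ∈ W.dualAnnihilator, ∃ c : 𝕜, ψ = c • φ := by
  refine ⟨fun h ψ hψ => Dual.exists_eq_smul_of_ker_le (h.trans fun w hw => ?_), fun h v hv => ?_⟩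
  · exact (Submodule.mem_dualAnnihilator ψ).1 hψ w hw
  · rw [← Subspace.forall_mem_dualAnnihilator_apply_eq_zero_iff]
    intro ψ hψ
    obtain ⟨c, rfl⟩ := h ψ hψ
    rw [LinearMap.smul_apply, mem_ker.1 hv, smul_zero]

theorem TensorProduct.exists_smul_of_tmul_eq_tmul {a a' : M} {b b' : N} (ha : a ≠ 0)
    (hb : b ≠ 0) (h : a ⊗ₜ[𝕜] b' = a' ⊗ₜ[𝕜] b) : ∃ c : 𝕜, a' = c • a ∧ b' = c • b := by
  obtain ⟨α, hα⟩ := Projective.exists_dual_eq_one 𝕜 ha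
  obtain ⟨β, hβ⟩ := Projective.exists_dual_eq_one 𝕜 hb
  have hb' := congrArg (TensorProduct.lid 𝕜 N ∘ rTensor N α) h
  have ha' := congrArg (TensorProduct.rid 𝕜 M ∘ lTensor M β) h
  simp only [Function.comp_apply, rTensor_tmul, lTensor_tmul, lid_tmul, rid_tmul, hα, hβ,
    one_smul] at hb' ha'
  have hc : β b' = α a' := by rw [hb', map_smul, hβ, smul_eq_mul, mul_one]
  exact ⟨α a', by rw [← hc, ha'], hb'⟩

theorem TensorProduct.tmul_sub_tmul_eq_zero_iff {a₁ b₁ : M} {a₂ b₂ : N} (ha₁ : a₁ ≠ 0)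
    (ha₂ : a₂ ≠ 0) : a₁ ⊗ₜ[𝕜] b₂ - b₁ ⊗ₜ[𝕜] a₂ = 0 ↔ ∃ c : 𝕜, b₁ = c • a₁ ∧ b₂ = c • a₂ := by
  refine ⟨fun h => exists_smul_of_tmul_eq_tmul ha₁ ha₂ (sub_eq_zero.1 h), ?_⟩
  rintro ⟨c, rfl, rfl⟩
  rw [tmul_smul, smul_tmul', sub_self]

end VectorSpace

theorem TensorProduct.exists_tmul_sub_tmul_eq_of_ne_zero {R M N : Type*} [CommRing R]
    [AddCommGroup M] [Module R M] [AddCommGroup N] [Module R N] {f₁ g₁ : M} {f₂ g₂ : N}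
    (h : f₁ ⊗ₜ[R] g₂ - g₁ ⊗ₜ[R] f₂ ≠ 0) :
    ∃ (a₁ b₁ : M) (a₂ b₂ : N), a₁ ≠ 0 ∧ a₂ ≠ 0 ∧
      a₁ ⊗ₜ[R] b₂ - b₁ ⊗ₜ[R] a₂ = f₁ ⊗ₜ[R] g₂ - g₁ ⊗ₜ[R] f₂ := by
  by_cases hf₁ : f₁ = 0
  · subst hf₁
    have hg₁ : g₁ ≠ 0 := by rintro rfl; simp at h
    have hf₂ : f₂ ≠ 0 := by rintro rfl; simp at h
    exact ⟨g₁, g₁, f₂, 0, hg₁, hf₂, by simp⟩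
  by_cases hf₂ : f₂ = 0
  · subst hf₂
    have hg₂ : g₂ ≠ 0 := by rintro rfl; simp at h
    exact ⟨f₁, 0, g₂, g₂, hf₁, hg₂, by simp⟩
  exact ⟨f₁, g₁, f₂, g₂, hf₁, hf₂, rfl⟩

section Koszul

variable {k V₁ V₂}

theorem coprod_comp_koszulFiber (f₁ g₁ : Dual k V₁) (f₂ g₂ : Dual k V₂) :
    g₁.coprod g₂ ∘ₗ koszulFiber k V₁ V₂ f₁ f₂ =
      -dualDistrib k V₁ V₂ (f₁ ⊗ₜ g₂ - g₁ ⊗ₜ f₂) := by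
  ext x y
  simp only [koszulFiber, coprod_comp_prod, comp_neg, AlgebraTensorModule.curry_apply,
    restrictScalars_self, curry_apply, LinearMap.add_apply, coe_comp, LinearEquiv.coe_coe,
    Function.comp_apply, lTensor_tmul, rid_tmul, map_smul, smul_eq_mul, LinearMap.neg_apply,
    rTensor_tmul, lid_tmul, map_sub, neg_sub, LinearMap.sub_apply, dualDistrib_apply]
  ring

theorem ker_coprod_le_map_koszulFiber_iff {f₁ : Dual k V₁} {f₂ : Dual k V₂} (hf₁ : f₁ ≠ 0)
    (hf₂ : f₂ ≠ 0) (K : Submodule k (V₁ ⊗[k] V₂)) :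
    ker (f₁.coprod f₂) ≤ K.map (koszulFiber k V₁ V₂ f₁ f₂) ↔
      ∀ (g₁ : Dual k V₁) (g₂ : Dual k V₂),
        (∀ x ∈ K, dualDistrib k V₁ V₂ (f₁ ⊗ₜ g₂ - g₁ ⊗ₜ f₂) x = 0) →
          f₁ ⊗ₜ[k] g₂ - g₁ ⊗ₜ[k] f₂ = 0 := by
  have hannihilator (g₁ : Dual k V₁) (g₂ : Dual k V₂) :
      g₁.coprod g₂ ∈ (K.map (koszulFiber k V₁ V₂ f₁ f₂)).dualAnnihilator ↔
        ∀ x ∈ K, dualDistrib k V₁ V₂ (f₁ ⊗ₜ g₂ - g₁ ⊗ₜ f₂) x = 0 := by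
    simp only [Submodule.mem_dualAnnihilator, Submodule.mem_map, forall_exists_index, and_imp,
      forall_apply_eq_imp_iff₂, ← comp_apply (g₁.coprod g₂), coprod_comp_koszulFiber,
      LinearMap.neg_apply, neg_eq_zero]
  have hproportional (g₁ : Dual k V₁) (g₂ : Dual k V₂) :
      (∃ c : k, g₁.coprod g₂ = c • f₁.coprod f₂) ↔ f₁ ⊗ₜ[k] g₂ - g₁ ⊗ₜ[k] f₂ = 0 := by
    simp [tmul_sub_tmul_eq_zero_iff hf₁ hf₂, prod_ext_iff, smul_comp]
  rw [Subspace.ker_le_iff_forall_mem_dualAnnihilator]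
  refine ⟨fun h g₁ g₂ hg => (hproportional g₁ g₂).1 (h _ ((hannihilator g₁ g₂).2 hg)),
    fun h ψ hψ => ?_⟩
  rw [← coprod_comp_inl_inr ψ] at hψ ⊢
  exact (hproportional _ _).2 (h _ _ ((hannihilator _ _).1 hψ))

end Koszul

theorem stmt14 (K : Submodule k (V₁ ⊗[k] V₂)) :
    (∀ (f₁ : Module.Dual k V₁) (f₂ : Module.Dual k V₂), f₁ ≠ 0 → f₂ ≠ 0 →
      ∀ w : V₁ × V₂, f₁ w.1 + f₂ w.2 = 0 →
        w ∈ Submodule.map (koszulFiber k V₁ V₂ f₁ f₂) K) ↔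
    (∀ (f₁ g₁ : Module.Dual k V₁) (f₂ g₂ : Module.Dual k V₂),
      (∀ x ∈ K, TensorProduct.dualDistrib k V₁ V₂ (f₁ ⊗ₜ[k] g₂ - g₁ ⊗ₜ[k] f₂) x = 0) →
      f₁ ⊗ₜ[k] g₂ - g₁ ⊗ₜ[k] f₂ = (0 : Module.Dual k V₁ ⊗[k] Module.Dual k V₂)) := by
  constructor
  · intro hexact f₁ g₁ f₂ g₂ hK
    by_contra hT
    obtain ⟨a₁, b₁, a₂, b₂, ha₁, ha₂, hab⟩ := exists_tmul_sub_tmul_eq_of_ne_zero hT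
    rw [← hab] at hK hT
    exact hT ((ker_coprod_le_map_koszulFiber_iff ha₁ ha₂ K).1
      (fun w hw => hexact a₁ a₂ ha₁ ha₂ w hw) b₁ b₂ hK)
  · intro hrank f₁ f₂ hf₁ hf₂ w hw
    exact (ker_coprod_le_map_koszulFiber_iff hf₁ hf₂ K).2 (fun g₁ g₂ => hrank f₁ g₁ f₂ g₂) hw
end

section
/- Let V = V_1 ⊕ V_2 and K ⊆ V_1 ⊗ V_2 ⊆ ⋀²V. The bigraded Koszul module W(V,K), defined as the middle homology of K ⊗ S → V ⊗ S → S, is generated as an S-module in bidegree (0,0). Consequently, if W_{d_0,e_0}(V,K) = 0 for some (d_0,e_0), then W_{d,e}(V,K) = 0 for all d ≥ d_0 and e ≥ e_0. -/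
/-!
Every Koszul cycle of bidegree `(d, e)` is a `k`-combination of the mixed relations
`y_b e_{x_a} - x_a e_{y_b}` with coefficients in `S_{d,e}`. Indeed, the Koszul complex of `S` is
exact at `V ⊗ S`, so a cycle is a combination of relations `X_i e_j - X_j e_i`, and we may take
the coefficients bihomogeneous; a relation between two variables of the same colour then has a
coefficient of positive degree in the other colour, and `δ₂ δ₃ = 0` rewrites it as a combination
of mixed relations. Consequently every cycle of bidegree `(d + 1, e)` is a sum `∑ x_c z_c` of
cycles `z_c` of bidegree `(d, e)`, that is, `W(V, K)` is generated in bidegree `(0, 0)`. Since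
`x_c` times a Koszul boundary is again a Koszul boundary, `W_{d,e} = 0` forces `W_{d+1,e} = 0`,
and symmetrically `W_{d,e+1} = 0`.
-/

open MvPolynomial

/-- The bigrading weight on the variables of `S = Sym(V₁ ⊕ V₂)`, realized as the polynomial
ring in `n₁ + n₂` variables: variables from `V₁` have bidegree `(1,0)`, those from `V₂` have
bidegree `(0,1)`. -/
def biWeight (n₁ n₂ : ℕ) : (Fin n₁ ⊕ Fin n₂) → ℕ × ℕ :=
  Sum.elim (fun _ => (1, 0)) (fun _ => (0, 1))

/-- `W_{d,e}(V,K) = 0`, i.e. exactness in the middle of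
`K ⊗ S_{d,e} → V₁ ⊗ S_{d,e+1} ⊕ V₂ ⊗ S_{d+1,e} → S_{d+1,e+1}`.
An element of the middle term is a tuple `v` of polynomials (the coefficients of the basis of
`V = V₁ ⊕ V₂`) of the indicated bidegrees; it is a cycle when `∑ xᵢ · v i = 0`, and a boundary
when it is a sum of Koszul boundaries `δ₂(κ ⊗ s)` with `κ ∈ K ⊆ V₁ ⊗ V₂ = S_{(1,1)}` and
`s ∈ S_{d,e}`; in coordinates `δ₂(κ ⊗ s)` has `V₁`-components `(∂κ/∂xᵢ)·s` and
`V₂`-components `-(∂κ/∂yⱼ)·s`. -/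
def KoszulVanish (k : Type) [Field k] (n₁ n₂ : ℕ)
    (K : Submodule k (MvPolynomial (Fin n₁ ⊕ Fin n₂) k)) (d e : ℕ) : Prop :=
  ∀ v : (Fin n₁ ⊕ Fin n₂) → MvPolynomial (Fin n₁ ⊕ Fin n₂) k,
    (∀ i : Fin n₁, v (Sum.inl i) ∈
      weightedHomogeneousSubmodule k (biWeight n₁ n₂) (d, e + 1)) →
    (∀ j : Fin n₂, v (Sum.inr j) ∈
      weightedHomogeneousSubmodule k (biWeight n₁ n₂) (d + 1, e)) →
    (∑ i : Fin n₁ ⊕ Fin n₂, X i * v i) = 0 →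
    ∃ (m : ℕ) (κ : Fin m → MvPolynomial (Fin n₁ ⊕ Fin n₂) k)
      (s : Fin m → MvPolynomial (Fin n₁ ⊕ Fin n₂) k),
      (∀ t, κ t ∈ K) ∧
      (∀ t, s t ∈ weightedHomogeneousSubmodule k (biWeight n₁ n₂) (d, e)) ∧
      (∀ i : Fin n₁, v (Sum.inl i) = ∑ t, pderiv (Sum.inl i) (κ t) * s t) ∧
      (∀ j : Fin n₂, v (Sum.inr j) = -∑ t, pderiv (Sum.inr j) (κ t) * s t)

section KoszulRelation

variable {σ : Type*} (R : Type*) [CommRing R] [DecidableEq σ]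

/-- The Koszul differential `δ₂ (e_i ∧ e_j) = X_i e_j - X_j e_i`. -/
noncomputable def koszulRelation (i j : σ) : σ → MvPolynomial σ R :=
  Pi.single j (X i) - Pi.single i (X j)

variable {R}

/-- `δ₂ (δ₃ (e_l ∧ e_i ∧ e_j)) = 0`. -/
theorem X_smul_koszulRelation (l i j : σ) :
    (X l : MvPolynomial σ R) • koszulRelation R i j =
      (X i : MvPolynomial σ R) • koszulRelation R l j -
        (X j : MvPolynomial σ R) • koszulRelation R l i := by
  ext x : 1
  simp only [koszulRelation, Pi.single_apply, Pi.smul_apply, Pi.sub_apply, smul_eq_mul]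
  split_ifs <;> simp_all <;> ring

variable [Fintype σ]

theorem sum_X_mul_koszulRelation (i j : σ) : ∑ l, X l * koszulRelation R i j l = 0 := by
  simp [koszulRelation, mul_sub, Finset.sum_sub_distrib, Pi.single_apply, mul_comm]

theorem sum_smul_koszulRelation_apply (t : σ → σ → MvPolynomial σ R) (l : σ) :
    (∑ i, ∑ j, t i j • koszulRelation R i j) l = ∑ i, X i * t i l - ∑ j, X j * t l j := by
  simp [koszulRelation, Finset.sum_apply, mul_sub, Finset.sum_sub_distrib, Pi.single_apply,
    mul_comm]

/-- Expanding in `X₀`, the constant terms of `v₁, …, vₙ` form a syzygy in the remaining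
variables, their other terms are divisible by `X₀`, and `v₀` is determined by them. -/
theorem exists_eq_sum_X_mul_sub_sum_X_mul_fin :
    ∀ (n : ℕ) (v : Fin n → MvPolynomial (Fin n) R), ∑ i, X i * v i = 0 →
      ∃ t : Fin n → Fin n → MvPolynomial (Fin n) R,
        ∀ l, v l = ∑ i, X i * t i l - ∑ j, X j * t l j
  | 0, _, _ => ⟨0, fun l => l.elim0⟩
  | n + 1, v, hv => by
    obtain ⟨E, hE⟩ : ∃ E, E = finSuccEquiv R n := ⟨_, rfl⟩
    have hX0 : E (X 0) = Polynomial.X := hE ▸ finSuccEquiv_X_zero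
    have hXs (i : Fin n) : E (X i.succ) = Polynomial.C (X i) := hE ▸ finSuccEquiv_X_succ
    have hP : Polynomial.X * E (v 0) + ∑ i : Fin n, Polynomial.C (X i) * E (v i.succ) = 0 := by
      have := congrArg E hv
      rw [map_sum, map_zero, Fin.sum_univ_succ] at this
      simpa only [map_mul, hX0, hXs] using this
    obtain ⟨Q, a, hPsucc⟩ : ∃ (Q : Fin n → _) (a : Fin n → _),
        ∀ i, E (v i.succ) = Polynomial.X * Q i + Polynomial.C (a i) :=
      ⟨_, _, fun i => (Polynomial.X_mul_divX_add _).symm⟩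
    simp only [hPsucc, mul_add, Finset.sum_add_distrib, ← Polynomial.C_mul, ← map_sum] at hP
    have ha : ∑ i, X i * a i = 0 := by
      simpa [Polynomial.mul_coeff_zero] using congrArg (Polynomial.coeff · 0) hP
    obtain ⟨t, ht⟩ := exists_eq_sum_X_mul_sub_sum_X_mul_fin n a ha
    have hP0 : E (v 0) = -∑ i, Polynomial.C (X i) * Q i := by
      rw [ha, map_zero, add_zero] at hP
      rw [eq_neg_iff_add_eq_zero, ← Polynomial.monic_X.mul_right_eq_zero_iff, mul_add,
        Finset.mul_sum, ← hP]
      simp only [mul_left_comm]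
    refine ⟨Fin.cons (Fin.cons 0 fun j => E.symm (Q j))
      fun i => Fin.cons 0 fun j => E.symm (Polynomial.C (t i j)), fun l => E.injective ?_⟩
    cases l using Fin.cases with
    | zero => simp [Fin.sum_univ_succ, hXs, hP0]
    | succ l => simp [Fin.sum_univ_succ, hX0, hXs, hPsucc, ht l, add_sub_assoc]

theorem exists_eq_sum_smul_koszulRelation (v : σ → MvPolynomial σ R) (hv : ∑ i, X i * v i = 0) :
    ∃ t : σ → σ → MvPolynomial σ R, v = ∑ i, ∑ j, t i j • koszulRelation R i j := by
  let e := Fintype.equivFin σ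
  let E := renameEquiv R e
  have hEX (i : σ) : E (X i) = X (e i) := rename_X _ _
  obtain ⟨t, ht⟩ := exists_eq_sum_X_mul_sub_sum_X_mul_fin _ (fun l => E (v (e.symm l))) (by
    rw [← e.sum_comp, ← map_zero E, ← hv, map_sum]
    simp [hEX])
  refine ⟨fun i j => E.symm (t (e i) (e j)), funext fun l => E.injective ?_⟩
  rw [sum_smul_koszulRelation_apply, ← e.symm_apply_apply l, ht, e.symm_apply_apply]
  simp [map_sub, map_sum, hEX, ← e.sum_comp]

end KoszulRelation

section WeightedHomogeneous

variable {σ R M : Type*} [CommSemiring R] [AddCommMonoid M] (w : σ → M)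

theorem exists_monomial_eq_mul_X {m : σ →₀ ℕ} {l : σ} (hl : m l ≠ 0) (r : R) :
    ∃ m', monomial m r = monomial m' r * X l ∧
      Finsupp.weight w m = Finsupp.weight w m' + w l := by
  obtain ⟨m', rfl⟩ : ∃ m', m = m' + Finsupp.single l 1 :=
    ⟨m - Finsupp.single l 1,
      (tsub_add_cancel_of_le (Finsupp.single_le_iff.2 (Nat.one_le_iff_ne_zero.2 hl))).symm⟩
  exact ⟨m', by rw [monomial_add_single, pow_one], by rw [map_add, Finsupp.weight_single, one_smul]⟩

noncomputable def piWeightedHomogeneousComponent (D : σ → M) :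
    (σ → MvPolynomial σ R) →ₗ[R] σ → MvPolynomial σ R :=
  LinearMap.pi fun l => weightedHomogeneousComponent w (D l) ∘ₗ LinearMap.proj l

variable {w}

theorem piWeightedHomogeneousComponent_eq_self {D : σ → M} {v : σ → MvPolynomial σ R}
    (hv : ∀ l, v l ∈ weightedHomogeneousSubmodule R w (D l)) :
    piWeightedHomogeneousComponent w D v = v :=
  funext fun l => weightedHomogeneousComponent_eq_self (hv l)

theorem piWeightedHomogeneousComponent_single [DecidableEq σ] (D : σ → M) (j : σ)
    (p : MvPolynomial σ R) :
    piWeightedHomogeneousComponent w D (Pi.single j p) =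
      Pi.single j (weightedHomogeneousComponent w (D j) p) := by
  ext l : 1
  by_cases h : l = j
  · subst h; simp [piWeightedHomogeneousComponent]
  · simp [piWeightedHomogeneousComponent, h]

end WeightedHomogeneous

theorem piWeightedHomogeneousComponent_monomial_smul_koszulRelation {σ R M : Type*}
    [CommRing R] [AddCommMonoid M] [IsRightCancelAdd M] [DecidableEq σ] [DecidableEq M]
    {w : σ → M} {D : σ → M} {ν : M} (hD : ∀ l, D l + w l = ν) (m : σ →₀ ℕ) (r : R)
    (i j : σ) :
    piWeightedHomogeneousComponent w D (monomial m r • koszulRelation R i j) =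
      if Finsupp.weight w m + w i + w j = ν then monomial m r • koszulRelation R i j else 0 := by
  have key (i j : σ) : weightedHomogeneousComponent w (D j) (monomial m r * X i) =
      if Finsupp.weight w m + w i + w j = ν then monomial m r * X i else 0 := by
    rw [weightedHomogeneousComponent_of_mem ((isWeightedHomogeneous_monomial w m r rfl).mul
      (isWeightedHomogeneous_X R w i)), ← hD j]
    exact if_congr (eq_comm.trans (add_left_inj _).symm) rfl rfl
  simp only [koszulRelation, smul_sub, ← Pi.single_smul', smul_eq_mul, map_sub,
    piWeightedHomogeneousComponent_single, key, add_right_comm _ (w j) (w i)]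
  split_ifs <;> simp

section Bigraded

variable {k : Type} [CommRing k] {n₁ n₂ : ℕ}

local notation "𝒮" => weightedHomogeneousSubmodule k (biWeight n₁ n₂)

@[simp]
theorem biWeight_inl (a : Fin n₁) : biWeight n₁ n₂ (.inl a) = (1, 0) := rfl

@[simp]
theorem biWeight_inr (b : Fin n₂) : biWeight n₁ n₂ (.inr b) = (0, 1) := rfl

theorem biWeight_swap_add (l : Fin n₁ ⊕ Fin n₂) :
    (biWeight n₁ n₂ l).swap + biWeight n₁ n₂ l = (1, 1) := by
  cases l <;> rfl

theorem weight_biWeight (m : Fin n₁ ⊕ Fin n₂ →₀ ℕ) :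
    Finsupp.weight (biWeight n₁ n₂) m = (∑ a, m (.inl a), ∑ b, m (.inr b)) := by
  simp [Finsupp.weight_eq_sum, Fintype.sum_sum_type, biWeight, Prod.ext_iff, Prod.fst_sum,
    Prod.snd_sum]

theorem exists_biWeight_eq_of_le_weight {u : ℕ × ℕ} (hu : u = (1, 0) ∨ u = (0, 1))
    {m : Fin n₁ ⊕ Fin n₂ →₀ ℕ} (h : u ≤ Finsupp.weight (biWeight n₁ n₂) m) :
    ∃ l, biWeight n₁ n₂ l = u ∧ m l ≠ 0 := by
  rw [weight_biWeight, Prod.mk_le_mk] at h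
  rcases hu with rfl | rfl
  · obtain ⟨a, -, ha⟩ := Finset.exists_ne_zero_of_sum_ne_zero (by omega : ∑ a, m (.inl a) ≠ 0)
    exact ⟨.inl a, rfl, ha⟩
  · obtain ⟨b, -, hb⟩ := Finset.exists_ne_zero_of_sum_ne_zero (by omega : ∑ b, m (.inr b) ≠ 0)
    exact ⟨.inr b, rfl, hb⟩

variable (k) in
/-- Coordinate `l` lives in bidegree `δ + (w l).swap`, i.e. `(d, e + 1)` on `V₁` and
`(d + 1, e)` on `V₂` when `δ = (d, e)`. -/
noncomputable def koszulCycles (δ : ℕ × ℕ) :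
    Submodule k (Fin n₁ ⊕ Fin n₂ → MvPolynomial (Fin n₁ ⊕ Fin n₂) k) where
  carrier := {v | (∀ l, v l ∈ 𝒮 (δ + (biWeight n₁ n₂ l).swap)) ∧ ∑ l, X l * v l = 0}
  add_mem' := fun ⟨hv, hv'⟩ ⟨hw, hw'⟩ =>
    ⟨fun l => add_mem (hv l) (hw l), by simp [mul_add, Finset.sum_add_distrib, hv', hw']⟩
  zero_mem' := ⟨fun _ => zero_mem _, by simp⟩
  smul_mem' c _ := fun ⟨hv, hv'⟩ =>
    ⟨fun l => Submodule.smul_mem _ c (hv l), by simp [← Finset.smul_sum, hv']⟩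

variable (k) in
/-- The image of `(V₁ ⊗ V₂) ⊗ S_δ` under `δ₂`: the two variables of a relation have
complementary weights. -/
noncomputable def mixedKoszulBoundaries (δ : ℕ × ℕ) :
    Submodule k (Fin n₁ ⊕ Fin n₂ → MvPolynomial (Fin n₁ ⊕ Fin n₂) k) :=
  Submodule.span k {v | ∃ i j, biWeight n₁ n₂ i + biWeight n₁ n₂ j = (1, 1) ∧
    ∃ s ∈ 𝒮 δ, v = s • koszulRelation k i j}

theorem smul_koszulRelation_mem_mixedKoszulBoundaries {δ : ℕ × ℕ} {i j : Fin n₁ ⊕ Fin n₂}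
    (hij : biWeight n₁ n₂ i + biWeight n₁ n₂ j = (1, 1)) {s : MvPolynomial (Fin n₁ ⊕ Fin n₂) k}
    (hs : s ∈ 𝒮 δ) : s • koszulRelation k i j ∈ mixedKoszulBoundaries k δ :=
  Submodule.subset_span ⟨i, j, hij, s, hs, rfl⟩

theorem koszulRelation_apply_mem {i j : Fin n₁ ⊕ Fin n₂}
    (hij : biWeight n₁ n₂ i + biWeight n₁ n₂ j = (1, 1)) (l : Fin n₁ ⊕ Fin n₂) :
    koszulRelation k i j l ∈ 𝒮 (biWeight n₁ n₂ l).swap := by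
  have hswap (i j : Fin n₁ ⊕ Fin n₂) (h : biWeight n₁ n₂ i + biWeight n₁ n₂ j = (1, 1)) :
      biWeight n₁ n₂ i = (biWeight n₁ n₂ j).swap := by
    cases i <;> cases j <;> first | rfl | cases h
  simp only [koszulRelation, Pi.sub_apply, Pi.single_apply]
  refine sub_mem ?_ ?_ <;> split_ifs with h <;> subst_vars
  · exact (hswap _ _ hij) ▸ isWeightedHomogeneous_X k _ _
  · exact zero_mem _
  · exact (hswap _ _ ((add_comm _ _).trans hij)) ▸ isWeightedHomogeneous_X k _ _
  · exact zero_mem _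

theorem mixedKoszulBoundaries_le_koszulCycles (δ : ℕ × ℕ) :
    mixedKoszulBoundaries k δ ≤ koszulCycles (n₁ := n₁) (n₂ := n₂) k δ := by
  refine Submodule.span_le.2 ?_
  rintro _ ⟨i, j, hij, s, hs, rfl⟩
  refine ⟨fun l => (hs.mul (koszulRelation_apply_mem hij l) :), ?_⟩
  simp [mul_left_comm _ s, ← Finset.mul_sum, sum_X_mul_koszulRelation]

theorem monomial_smul_koszulRelation_mem_mixedKoszulBoundaries {δ : ℕ × ℕ}
    {m : Fin n₁ ⊕ Fin n₂ →₀ ℕ} {i j : Fin n₁ ⊕ Fin n₂}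
    (h : Finsupp.weight (biWeight n₁ n₂) m + biWeight n₁ n₂ i + biWeight n₁ n₂ j = δ + (1, 1))
    (r : k) : monomial m r • koszulRelation k i j ∈ mixedKoszulBoundaries k δ := by
  by_cases hij : biWeight n₁ n₂ i + biWeight n₁ n₂ j = (1, 1)
  · rw [add_assoc, hij] at h
    exact smul_koszulRelation_mem_mixedKoszulBoundaries hij
      (isWeightedHomogeneous_monomial _ _ _ (add_right_cancel h))
  -- `i` and `j` have the same weight, so `m` contains a variable `l` of the other weight
  obtain ⟨l, hli, hlj, hml⟩ : ∃ l, biWeight n₁ n₂ l + biWeight n₁ n₂ i = (1, 1) ∧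
      biWeight n₁ n₂ l + biWeight n₁ n₂ j = (1, 1) ∧ m l ≠ 0 := by
    have h₁ := congrArg Prod.fst h
    have h₂ := congrArg Prod.snd h
    rcases i with a | b <;> rcases j with a' | b' <;> simp at hij h₁ h₂
    · obtain ⟨l, hl, hml⟩ := exists_biWeight_eq_of_le_weight (Or.inr rfl) (m := m)
        (Prod.le_def.2 ⟨Nat.zero_le _, by simp only; omega⟩)
      exact ⟨l, by rw [hl]; rfl, by rw [hl]; rfl, hml⟩
    · obtain ⟨l, hl, hml⟩ := exists_biWeight_eq_of_le_weight (Or.inl rfl) (m := m)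
        (Prod.le_def.2 ⟨by simp only; omega, Nat.zero_le _⟩)
      exact ⟨l, by rw [hl]; rfl, by rw [hl]; rfl, hml⟩
  obtain ⟨m', hm', hwm⟩ := exists_monomial_eq_mul_X (biWeight n₁ n₂) hml r
  rw [hwm] at h
  have hdeg {a b} (hlb : biWeight n₁ n₂ l + biWeight n₁ n₂ b = (1, 1))
      (hab : Finsupp.weight (biWeight n₁ n₂) m' + biWeight n₁ n₂ a + biWeight n₁ n₂ l +
        biWeight n₁ n₂ b = δ + (1, 1)) : monomial m' r * X a ∈ 𝒮 δ := by
    rw [add_assoc, hlb] at hab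
    exact (add_right_cancel hab) ▸
      (isWeightedHomogeneous_monomial _ _ _ rfl).mul (isWeightedHomogeneous_X k _ a)
  rw [hm', mul_smul, X_smul_koszulRelation, smul_sub, smul_smul, smul_smul]
  exact sub_mem
    (smul_koszulRelation_mem_mixedKoszulBoundaries hlj (hdeg hlj (by rw [← h]; abel)))
    (smul_koszulRelation_mem_mixedKoszulBoundaries hli (hdeg hli (by rw [← h]; abel)))

theorem koszulCycles_le_mixedKoszulBoundaries (δ : ℕ × ℕ) :
    koszulCycles (n₁ := n₁) (n₂ := n₂) k δ ≤ mixedKoszulBoundaries k δ := by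
  rintro v ⟨hdeg, hcyc⟩
  obtain ⟨t, rfl⟩ := exists_eq_sum_smul_koszulRelation v hcyc
  have hD (l : Fin n₁ ⊕ Fin n₂) :
      δ + (biWeight n₁ n₂ l).swap + biWeight n₁ n₂ l = δ + (1, 1) := by
    rw [add_assoc, biWeight_swap_add]
  rw [← piWeightedHomogeneousComponent_eq_self hdeg, map_sum]
  refine Submodule.sum_mem _ fun i _ => ?_
  rw [map_sum]
  refine Submodule.sum_mem _ fun j _ => ?_
  induction t i j using MvPolynomial.induction_on' with
  | monomial m r =>
    rw [piWeightedHomogeneousComponent_monomial_smul_koszulRelation hD]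
    split_ifs with h
    · exact monomial_smul_koszulRelation_mem_mixedKoszulBoundaries h r
    · exact zero_mem _
  | add p q hp hq => rw [add_smul, map_add]; exact add_mem hp hq

/-- `δ₂ (κ ⊗ s)` in the coordinates of `KoszulVanish`. -/
noncomputable def koszulBoundary (κ s : MvPolynomial (Fin n₁ ⊕ Fin n₂) k) :
    Fin n₁ ⊕ Fin n₂ → MvPolynomial (Fin n₁ ⊕ Fin n₂) k
  | .inl a => pderiv (.inl a) κ * s
  | .inr b => -(pderiv (.inr b) κ * s)

variable (k) in
noncomputable def koszulBoundaries (K : Submodule k (MvPolynomial (Fin n₁ ⊕ Fin n₂) k))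
    (δ : ℕ × ℕ) : Submodule k (Fin n₁ ⊕ Fin n₂ → MvPolynomial (Fin n₁ ⊕ Fin n₂) k) :=
  Submodule.span k (Set.image2 koszulBoundary K (𝒮 δ))

theorem X_smul_mem_koszulBoundaries {K : Submodule k (MvPolynomial (Fin n₁ ⊕ Fin n₂) k)}
    {δ : ℕ × ℕ} (c : Fin n₁ ⊕ Fin n₂) {v : Fin n₁ ⊕ Fin n₂ → MvPolynomial (Fin n₁ ⊕ Fin n₂) k}
    (hv : v ∈ koszulBoundaries k K δ) :
    (X c : MvPolynomial (Fin n₁ ⊕ Fin n₂) k) • v ∈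
      koszulBoundaries k K (δ + biWeight n₁ n₂ c) := by
  induction hv using Submodule.span_induction with
  | mem _ h =>
    obtain ⟨κ, hκ, s, hs, rfl⟩ := h
    have : (X c : MvPolynomial _ k) • koszulBoundary κ s = koszulBoundary κ (X c * s) := by
      ext (a | b) : 1 <;> simp only [koszulBoundary, Pi.smul_apply, smul_eq_mul] <;> ring
    rw [this, add_comm]
    exact Submodule.subset_span
      (Set.mem_image2_of_mem hκ ((isWeightedHomogeneous_X k _ c).mul hs))
  | zero => rw [smul_zero]; exact zero_mem _
  | add _ _ _ _ hx hy => rw [smul_add]; exact add_mem hx hy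
  | smul a _ _ hx => rw [smul_comm]; exact Submodule.smul_mem _ a hx

theorem mixedKoszulBoundaries_add_le {K : Submodule k (MvPolynomial (Fin n₁ ⊕ Fin n₂) k)}
    {δ u : ℕ × ℕ} (hu : u = (1, 0) ∨ u = (0, 1))
    (h : mixedKoszulBoundaries k δ ≤ koszulBoundaries k K δ) :
    mixedKoszulBoundaries k (δ + u) ≤ koszulBoundaries k K (δ + u) := by
  refine Submodule.span_le.2 ?_
  rintro _ ⟨i, j, hij, s, hs, rfl⟩
  induction hs using IsWeightedHomogeneous.induction_on with
  | zero => rw [zero_smul]; exact zero_mem _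
  | add p q _ _ hp hq => rw [add_smul]; exact add_mem hp hq
  | monomial m r hm =>
    obtain ⟨c, hc, hmc⟩ := exists_biWeight_eq_of_le_weight hu (hm ▸ le_add_self)
    obtain ⟨m', hm', hwm⟩ := exists_monomial_eq_mul_X (biWeight n₁ n₂) hmc r
    rw [hwm, hc] at hm
    rw [hm', mul_comm, mul_smul, ← hc]
    exact X_smul_mem_koszulBoundaries c (h (smul_koszulRelation_mem_mixedKoszulBoundaries hij
      (isWeightedHomogeneous_monomial _ _ _ (add_right_cancel hm))))

theorem koszulCycles_add_le {K : Submodule k (MvPolynomial (Fin n₁ ⊕ Fin n₂) k)}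
    {δ u : ℕ × ℕ} (hu : u = (1, 0) ∨ u = (0, 1))
    (h : koszulCycles k δ ≤ koszulBoundaries k K δ) :
    koszulCycles k (δ + u) ≤ koszulBoundaries k K (δ + u) :=
  (koszulCycles_le_mixedKoszulBoundaries _).trans <| mixedKoszulBoundaries_add_le hu <|
    (mixedKoszulBoundaries_le_koszulCycles δ).trans h

end Bigraded

section KoszulVanish

variable {k : Type} [Field k] {n₁ n₂ : ℕ} {K : Submodule k (MvPolynomial (Fin n₁ ⊕ Fin n₂) k)}
  {d e : ℕ}

theorem koszulVanish_iff :
    KoszulVanish k n₁ n₂ K d e ↔ koszulCycles k (d, e) ≤ koszulBoundaries k K (d, e) := by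
  constructor
  · rintro h v ⟨hdeg, hcyc⟩
    obtain ⟨m, κ, s, hκ, hs, hinl, hinr⟩ :=
      h v (fun a => hdeg (.inl a)) (fun b => hdeg (.inr b)) hcyc
    have hv : v = ∑ t, koszulBoundary (κ t) (s t) := by
      ext (a | b) : 1 <;> simp [koszulBoundary, hinl, hinr, Finset.sum_apply]
    rw [hv]
    exact Submodule.sum_mem _ fun t _ =>
      Submodule.subset_span (Set.mem_image2_of_mem (hκ t) (hs t))
  · intro h v hinl hinr hcyc
    obtain ⟨m, f, g, hv⟩ := Submodule.mem_span_set'.1 (h ⟨Sum.forall.2 ⟨hinl, hinr⟩, hcyc⟩)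
    choose κ hκ s hs hg using fun t => (g t).2
    refine ⟨m, κ, fun t => f t • s t, hκ, fun t => Submodule.smul_mem _ _ (hs t), fun a => ?_,
      fun b => ?_⟩ <;> simp [← hv, ← hg, koszulBoundary, Finset.sum_apply]

theorem KoszulVanish.succ_left (h : KoszulVanish k n₁ n₂ K d e) :
    KoszulVanish k n₁ n₂ K (d + 1) e :=
  koszulVanish_iff.2 <|
    koszulCycles_add_le (δ := (d, e)) (u := (1, 0)) (.inl rfl) (koszulVanish_iff.1 h)

theorem KoszulVanish.succ_right (h : KoszulVanish k n₁ n₂ K d e) :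
    KoszulVanish k n₁ n₂ K d (e + 1) :=
  koszulVanish_iff.2 <|
    koszulCycles_add_le (δ := (d, e)) (u := (0, 1)) (.inr rfl) (koszulVanish_iff.1 h)

end KoszulVanish

theorem stmt16_general (k : Type) [Field k] (n₁ n₂ : ℕ)
    (K : Submodule k (MvPolynomial (Fin n₁ ⊕ Fin n₂) k))
    (d₀ e₀ : ℕ) (h0 : KoszulVanish k n₁ n₂ K d₀ e₀) :
    ∀ d e : ℕ, d₀ ≤ d → e₀ ≤ e → KoszulVanish k n₁ n₂ K d e := by
  intro d e hd he
  induction d, hd using Nat.le_induction with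
  | base =>
    induction e, he using Nat.le_induction with
    | base => exact h0
    | succ e _ ih => exact ih.succ_right
  | succ d _ ih => exact ih.succ_left

theorem stmt16 (k : Type) [Field k] (n₁ n₂ : ℕ) (h₁ : 2 ≤ n₁) (h₂ : 2 ≤ n₂)
    (K : Submodule k (MvPolynomial (Fin n₁ ⊕ Fin n₂) k))
    (hK : K ≤ weightedHomogeneousSubmodule k (biWeight n₁ n₂) (1, 1))
    (d₀ e₀ : ℕ) (h0 : KoszulVanish k n₁ n₂ K d₀ e₀) :
    ∀ d e : ℕ, d₀ ≤ d → e₀ ≤ e → KoszulVanish k n₁ n₂ K d e :=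
  stmt16_general k n₁ n₂ K d₀ e₀ h0
end
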